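/- For matrices X ∈ R^{n×D} and Z*, Ẑ ∈ R^{n×L}, with projections P_{M*} and P_{(M*)⊥} defined relative to M* = [X, Z*]: ‖[X, Z*]‖_* − ‖[X, Ẑ]‖_* ≤ ‖P_{M*}([0, Z* − Ẑ])‖_* − ‖P_{(M*)⊥}([0, Z* − Ẑ])‖_*. -/

import Mathlib

open Matrix

/-- Nuclear norm of a real matrix: sum of singular values. -/
noncomputable def nuclearNorm {m n : Type*} [Fintype m] [Fintype n] [DecidableEq n]
    (A : Matrix m n ℝ) : ℝ :=
  ∑ i, Real.sqrt ((show (Aᵀ * A).IsHermitian by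
    simpa [Matrix.conjTranspose_eq_transpose_of_trivial] using
      Matrix.isHermitian_conjTranspose_mul_self A).eigenvalues i)

/-- Squared Frobenius norm. -/
def frobSq {m n : Type*} [Fintype m] [Fintype n] (A : Matrix m n ℝ) : ℝ :=
  ∑ i, ∑ j, (A i j) ^ 2

/-- The projection `P_{A⊥}(B) = (I − A_u A_uᵀ) B (I − A_v A_vᵀ)`. -/
def perpProj {N M R : Type*} [Fintype N] [Fintype M] [Fintype R] [DecidableEq N] [DecidableEq M]
    (Au : Matrix N R ℝ) (Av : Matrix M R ℝ) (B : Matrix N M ℝ) : Matrix N M ℝ :=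
  (1 - Au * Auᵀ) * B * (1 - Av * Avᵀ)

/-- The tangent-space projection `P_A(B) = B − P_{A⊥}(B)`. -/
def tangentProj {N M R : Type*} [Fintype N] [Fintype M] [Fintype R] [DecidableEq N] [DecidableEq M]
    (Au : Matrix N R ℝ) (Av : Matrix M R ℝ) (B : Matrix N M ℝ) : Matrix N M ℝ :=
  B - perpProj Au Av B

section NuclearNormHelpers

variable {m n : Type*} [Fintype m] [Fintype n] [DecidableEq n]

lemma isHermitian_transpose_mul_self' (A : Matrix m n ℝ) : (Aᵀ * A).IsHermitian := by
  simpa [Matrix.conjTranspose_eq_transpose_of_trivial] using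
    Matrix.isHermitian_conjTranspose_mul_self A

lemma exists_spectral (C : Matrix m n ℝ) :
    ∃ V : Matrix n n ℝ, Vᵀ * V = 1 ∧ V * Vᵀ = 1 ∧
      Cᵀ * C = V * diagonal ((isHermitian_transpose_mul_self' C).eigenvalues) * Vᵀ := by
  classical
  set hC := isHermitian_transpose_mul_self' C with hhC
  refine ⟨(hC.eigenvectorUnitary : Matrix n n ℝ), ?_, ?_, ?_⟩
  · have h := Unitary.coe_star_mul_self hC.eigenvectorUnitary
    simpa [Matrix.star_eq_conjTranspose, conjTranspose_eq_transpose_of_trivial] using h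
  · have h := Unitary.coe_mul_star_self hC.eigenvectorUnitary
    simpa [Matrix.star_eq_conjTranspose, conjTranspose_eq_transpose_of_trivial] using h
  · have h := hC.spectral_theorem
    rw [RCLike.ofReal_real_eq_id] at h
    have hc : Cᴴ = Cᵀ := conjTranspose_eq_transpose_of_trivial C
    simpa [Unitary.conjStarAlgAut_apply, Matrix.star_eq_conjTranspose, conjTranspose_eq_transpose_of_trivial] using h

lemma exists_dual (C : Matrix m n ℝ) :
    ∃ (Q : Matrix m n ℝ) (W : Matrix n n ℝ),
      Q = C * W ∧
      trace (Cᵀ * Q) = nuclearNorm C ∧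
      (Qᵀ * Q)ᵀ = Qᵀ * Q ∧
      (Qᵀ * Q) * (Qᵀ * Q) = Qᵀ * Q ∧
      (∀ (k : Type) (_ : Fintype k) (N : Matrix n k ℝ), C * N = 0 → Q * N = 0) := by
  classical
  obtain ⟨V, hVV, hVV', hspec⟩ := exists_spectral C
  set μ : n → ℝ := (isHermitian_transpose_mul_self' C).eigenvalues with hμdef
  have hμ0 : ∀ i, 0 ≤ μ i := fun i => Matrix.eigenvalues_conjTranspose_mul_self_nonneg C i
  set f : n → ℝ := fun i => if 0 < μ i then (Real.sqrt (μ i))⁻¹ else 0 with hfdef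
  set W : Matrix n n ℝ := V * diagonal f * Vᵀ with hWdef
  have sand_mul : ∀ s t : n → ℝ,
      (V * diagonal s * Vᵀ) * (V * diagonal t * Vᵀ)
        = V * diagonal (fun i => s i * t i) * Vᵀ := by
    intro s t
    have h1 : Vᵀ * (V * (diagonal t * Vᵀ)) = diagonal t * Vᵀ := by
      rw [← mul_assoc, hVV, one_mul]
    simp only [mul_assoc, h1, ← diagonal_mul_diagonal]
  have sand_tr : ∀ s : n → ℝ, trace (V * diagonal s * Vᵀ) = ∑ i, s i := by
    intro s
    rw [trace_mul_cycle, hVV, one_mul, trace_diagonal]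
  have hQeq : Cᵀ * (C * W) = V * diagonal (fun i => Real.sqrt (μ i)) * Vᵀ := by
    rw [← Matrix.mul_assoc, hspec, hWdef, sand_mul]
    have hmf : (fun i => μ i * f i) = fun i => Real.sqrt (μ i) := by
      funext i
      by_cases h : 0 < μ i
      · simp only [hfdef, if_pos h]
        have hs : Real.sqrt (μ i) ≠ 0 := ne_of_gt (Real.sqrt_pos.mpr h)
        rw [eq_comm, eq_mul_inv_iff_mul_eq₀ hs, Real.mul_self_sqrt (hμ0 i)]
      · have h0 : μ i = 0 := le_antisymm (not_lt.mp h) (hμ0 i)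
        simp [hfdef, if_neg h, h0]
    rw [hmf]
  have hQQ : (C * W)ᵀ * (C * W)
      = V * diagonal (fun i => if 0 < μ i then (1:ℝ) else 0) * Vᵀ := by
    have hWT : Wᵀ = W := by
      rw [hWdef, transpose_mul, transpose_mul, transpose_transpose, diagonal_transpose,
        Matrix.mul_assoc]
    rw [transpose_mul, Matrix.mul_assoc, hQeq, hWT, hWdef, sand_mul]
    have hfs : (fun i => f i * Real.sqrt (μ i))
        = fun i => if 0 < μ i then (1:ℝ) else 0 := by
      funext i
      by_cases h : 0 < μ i
      · have hs : Real.sqrt (μ i) ≠ 0 := ne_of_gt (Real.sqrt_pos.mpr h)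
        simp [hfdef, if_pos h, inv_mul_cancel₀ hs]
      · have h0 : μ i = 0 := le_antisymm (not_lt.mp h) (hμ0 i)
        simp [hfdef, if_neg h, h0]
    rw [hfs]
  refine ⟨C * W, W, rfl, ?_, ?_, ?_, ?_⟩
  · rw [hQeq, sand_tr]; rfl
  · rw [hQQ, transpose_mul, transpose_mul, transpose_transpose, diagonal_transpose,
      Matrix.mul_assoc]
  · rw [hQQ, sand_mul]
    have hgg : (fun i => (if 0 < μ i then (1:ℝ) else 0) * (if 0 < μ i then (1:ℝ) else 0))
        = fun i => if 0 < μ i then (1:ℝ) else 0 := by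
      funext i
      by_cases h : 0 < μ i <;> simp [h]
    rw [hgg]
  · intro k instk N hN
    set f' : n → ℝ := fun i => if 0 < μ i then (μ i * Real.sqrt (μ i))⁻¹ else 0 with hf'def
    have hW2 : W = V * diagonal f' * Vᵀ * (Cᵀ * C) := by
      rw [hspec, sand_mul, hWdef]
      have hff : (fun i => f' i * μ i) = f := by
        funext i
        by_cases h : 0 < μ i
        · have h1 : Real.sqrt (μ i) ≠ 0 := ne_of_gt (Real.sqrt_pos.mpr h)
          have h2 : μ i ≠ 0 := ne_of_gt h
          simp only [hfdef, hf'def, if_pos h]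
          field_simp
        · have h0 : μ i = 0 := le_antisymm (not_lt.mp h) (hμ0 i)
          simp [hfdef, hf'def, if_neg h, h0]
      rw [hff]
    rw [hW2]
    simp only [Matrix.mul_assoc, hN, Matrix.mul_zero]

lemma quad_le_of_proj {P : Matrix n n ℝ} (hsym : Pᵀ = P) (hidem : P * P = P)
    (x : n → ℝ) : x ⬝ᵥ (P *ᵥ x) ≤ x ⬝ᵥ x := by
  have hv : x ᵥ* P = P *ᵥ x := by
    conv_lhs => rw [← hsym]
    rw [vecMul_transpose]
  have h1 : x ⬝ᵥ (P *ᵥ x) = (P *ᵥ x) ⬝ᵥ (P *ᵥ x) := by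
    calc x ⬝ᵥ (P *ᵥ x) = x ⬝ᵥ ((P * P) *ᵥ x) := by rw [hidem]
      _ = x ⬝ᵥ (P *ᵥ (P *ᵥ x)) := by rw [mulVec_mulVec]
      _ = (x ᵥ* P) ⬝ᵥ (P *ᵥ x) := dotProduct_mulVec _ _ _
      _ = (P *ᵥ x) ⬝ᵥ (P *ᵥ x) := by rw [hv]
  have hs : (0:ℝ) ≤ (P *ᵥ x) ⬝ᵥ (P *ᵥ x) := Finset.sum_nonneg fun i _ => mul_self_nonneg _
  have ht : (0:ℝ) ≤ x ⬝ᵥ x := Finset.sum_nonneg fun i _ => mul_self_nonneg _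
  have hcs : (x ⬝ᵥ (P *ᵥ x)) ^ 2 ≤ (x ⬝ᵥ x) * ((P *ᵥ x) ⬝ᵥ (P *ᵥ x)) := by
    have := Finset.sum_mul_sq_le_sq_mul_sq Finset.univ x (P *ᵥ x)
    simpa [dotProduct, pow_two, Finset.mul_sum, Finset.sum_mul, mul_comm, mul_assoc,
      mul_left_comm] using this
  rw [h1]
  nlinarith [hcs, h1, hs, ht]

lemma trace_le_nuclearNorm (C Q : Matrix m n ℝ)
    (hQ : ∀ x : n → ℝ, (Q *ᵥ x) ⬝ᵥ (Q *ᵥ x) ≤ x ⬝ᵥ x) :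
    trace (Cᵀ * Q) ≤ nuclearNorm C := by
  classical
  obtain ⟨V, hVV, hVV', hspec⟩ := exists_spectral C
  set μ : n → ℝ := (isHermitian_transpose_mul_self' C).eigenvalues with hμdef
  have hμ0 : ∀ i, 0 ≤ μ i := fun i => Matrix.eigenvalues_conjTranspose_mul_self_nonneg C i
  have key : trace (Cᵀ * Q) = ∑ i, ∑ k, (C * V) k i * (Q * V) k i := by
    have hS : (C * V)ᵀ * (Q * V) = Vᵀ * ((Cᵀ * Q) * V) := by
      rw [transpose_mul, Matrix.mul_assoc, ← Matrix.mul_assoc Cᵀ Q V]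
    have h1 : trace ((C * V)ᵀ * (Q * V)) = trace (Cᵀ * Q) := by
      rw [hS, trace_mul_comm, Matrix.mul_assoc, hVV', Matrix.mul_one]
    rw [← h1]
    simp [Matrix.trace, mul_apply, transpose_apply, diag_apply, mul_comm]
  rw [key]
  have colC : ∀ i, ∑ k, (C * V) k i * (C * V) k i = μ i := by
    intro i
    have h2 : (C * V)ᵀ * (C * V) = diagonal μ := by
      rw [transpose_mul, Matrix.mul_assoc, ← Matrix.mul_assoc Cᵀ C V, hspec]
      simp only [Matrix.mul_assoc]
      rw [hVV, Matrix.mul_one, ← Matrix.mul_assoc, hVV, one_mul]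
    have h3 := congrArg (fun M => M i i) h2
    simpa [mul_apply, transpose_apply, mul_comm] using h3
  have colQ : ∀ i, ∑ k, (Q * V) k i * (Q * V) k i ≤ 1 := by
    intro i
    have hcol : ∀ k, (Q * V) k i = (Q *ᵥ fun j => V j i) k := by
      intro k; simp [mul_apply, mulVec, dotProduct]
    have h4 := hQ (fun j => V j i)
    have h5 : (fun j => V j i) ⬝ᵥ (fun j => V j i) = 1 := by
      have := congrArg (fun M => M i i) hVV
      simpa [mul_apply, transpose_apply, dotProduct, one_apply] using this
    calc ∑ k, (Q * V) k i * (Q * V) k i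
        = (Q *ᵥ fun j => V j i) ⬝ᵥ (Q *ᵥ fun j => V j i) := by
          simp only [dotProduct, hcol]
      _ ≤ (fun j => V j i) ⬝ᵥ (fun j => V j i) := h4
      _ = 1 := h5
  have hterm : ∀ i, ∑ k, (C * V) k i * (Q * V) k i ≤ Real.sqrt (μ i) := by
    intro i
    have hcs := Real.sum_mul_le_sqrt_mul_sqrt Finset.univ
      (fun k => (C * V) k i) (fun k => (Q * V) k i)
    have e1 : ∑ k, ((C * V) k i) ^ 2 = μ i := by
      rw [← colC i]; congr 1; funext k; ring
    have e2 : ∑ k, ((Q * V) k i) ^ 2 ≤ 1 := by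
      calc ∑ k, ((Q * V) k i) ^ 2 = ∑ k, (Q * V) k i * (Q * V) k i := by
            congr 1; funext k; ring
        _ ≤ 1 := colQ i
    calc ∑ k, (C * V) k i * (Q * V) k i
        ≤ Real.sqrt (∑ k, ((C * V) k i) ^ 2) * Real.sqrt (∑ k, ((Q * V) k i) ^ 2) := hcs
      _ ≤ Real.sqrt (μ i) * 1 := by
          rw [e1]
          exact mul_le_mul_of_nonneg_left
            (Real.sqrt_le_one.mpr e2) (Real.sqrt_nonneg _)
      _ = Real.sqrt (μ i) := mul_one _
  calc ∑ i, ∑ k, (C * V) k i * (Q * V) k i ≤ ∑ i, Real.sqrt (μ i) :=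
        Finset.sum_le_sum fun i _ => hterm i
    _ = nuclearNorm C := rfl

end NuclearNormHelpers

/-- `‖[X,Z*]‖_* − ‖[X,Ẑ]‖_* ≤ ‖P_{M*}([0,Z*−Ẑ])‖_* − ‖P_{(M*)⊥}([0,Z*−Ẑ])‖_*`. -/
theorem nuclearNorm_concat_diff_le {n D L r : ℕ}
    (X : Matrix (Fin n) (Fin D) ℝ) (Zstar Zhat : Matrix (Fin n) (Fin L) ℝ)
    (Au : Matrix (Fin n) (Fin r) ℝ) (Av : Matrix (Fin D ⊕ Fin L) (Fin r) ℝ)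
    (σ : Fin r → ℝ)
    (hU : Auᵀ * Au = 1) (hV : Avᵀ * Av = 1) (hσpos : ∀ i, 0 < σ i)
    (hM : Matrix.fromCols X Zstar = Au * Matrix.diagonal σ * Avᵀ) :
    nuclearNorm (Matrix.fromCols X Zstar) - nuclearNorm (Matrix.fromCols X Zhat) ≤
      nuclearNorm (tangentProj Au Av
          (Matrix.fromCols (0 : Matrix (Fin n) (Fin D) ℝ) (Zstar - Zhat))) -
        nuclearNorm (perpProj Au Av
          (Matrix.fromCols (0 : Matrix (Fin n) (Fin D) ℝ) (Zstar - Zhat))) := by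
  classical
  set M : Matrix (Fin n) (Fin D ⊕ Fin L) ℝ := Matrix.fromCols X Zstar with hMdef
  set E : Matrix (Fin n) (Fin D ⊕ Fin L) ℝ :=
    Matrix.fromCols (0 : Matrix (Fin n) (Fin D) ℝ) (Zstar - Zhat) with hEdef
  set C2 : Matrix (Fin n) (Fin D ⊕ Fin L) ℝ := perpProj Au Av E with hC2def
  have hAu : Auᵀ * (1 - Au * Auᵀ) = 0 := by
    rw [Matrix.mul_sub, Matrix.mul_one, ← Matrix.mul_assoc, hU, Matrix.one_mul, sub_self]
  have hAv : Avᵀ * (1 - Av * Avᵀ) = 0 := by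
    rw [Matrix.mul_sub, Matrix.mul_one, ← Matrix.mul_assoc, hV, Matrix.one_mul, sub_self]
  have hMT : Mᵀ = Av * Matrix.diagonal σ * Auᵀ := by
    rw [hM, transpose_mul, transpose_mul, transpose_transpose, diagonal_transpose,
      Matrix.mul_assoc]
  have hz1 : Mᵀ * C2 = 0 := by
    rw [hMT, hC2def, perpProj]
    calc Av * Matrix.diagonal σ * Auᵀ * ((1 - Au * Auᵀ) * E * (1 - Av * Avᵀ))
        = Av * Matrix.diagonal σ * ((Auᵀ * (1 - Au * Auᵀ)) * (E * (1 - Av * Avᵀ))) := by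
          simp only [Matrix.mul_assoc]
      _ = 0 := by rw [hAu, Matrix.zero_mul, Matrix.mul_zero]
  have hC2T : C2ᵀ = (1 - Av * Avᵀ) * Eᵀ * (1 - Au * Auᵀ) := by
    rw [hC2def, perpProj, transpose_mul, transpose_mul, transpose_sub, transpose_sub,
      transpose_one, transpose_one, transpose_mul, transpose_mul, transpose_transpose,
      transpose_transpose, Matrix.mul_assoc]
  have hz2 : M * C2ᵀ = 0 := by
    rw [hC2T, hM]
    calc Au * Matrix.diagonal σ * Avᵀ * ((1 - Av * Avᵀ) * Eᵀ * (1 - Au * Auᵀ))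
        = Au * Matrix.diagonal σ * ((Avᵀ * (1 - Av * Avᵀ)) * (Eᵀ * (1 - Au * Auᵀ))) := by
          simp only [Matrix.mul_assoc]
      _ = 0 := by rw [hAv, Matrix.zero_mul, Matrix.mul_zero]
  obtain ⟨QM, WM, hQMdef, hQMtr, hQMsym, hQMidem, hQMsupp⟩ := exists_dual M
  obtain ⟨Q2, W2, hQ2def, hQ2tr, hQ2sym, hQ2idem, hQ2supp⟩ := exists_dual C2
  -- cross traces
  have hMQ2 : Mᵀ * Q2 = 0 := by
    rw [hQ2def, ← Matrix.mul_assoc, hz1, Matrix.zero_mul]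
  have hC2QM : C2ᵀ * QM = 0 := by
    have h : C2ᵀ * M = 0 := by
      have := congrArg transpose hz1
      simpa [transpose_mul] using this
    rw [hQMdef, ← Matrix.mul_assoc, h, Matrix.zero_mul]
  -- cross products
  have hQMC2t : QM * C2ᵀ = 0 := hQMsupp _ inferInstance C2ᵀ hz2
  have hC2QMt : C2 * QMᵀ = 0 := by
    have := congrArg transpose hQMC2t
    simpa [transpose_mul] using this
  have hQ2QMt : Q2 * QMᵀ = 0 := hQ2supp _ inferInstance QMᵀ hC2QMt
  have hQMQ2t : QM * Q2ᵀ = 0 := by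
    have := congrArg transpose hQ2QMt
    simpa [transpose_mul] using this
  have hQMtQ2 : QMᵀ * Q2 = 0 := by
    rw [hQMdef, hQ2def, transpose_mul, Matrix.mul_assoc, ← Matrix.mul_assoc Mᵀ C2 W2, hz1,
      Matrix.zero_mul, Matrix.mul_zero]
  have hQ2tQM : Q2ᵀ * QM = 0 := by
    have := congrArg transpose hQMtQ2
    simpa [transpose_mul] using this
  set Q : Matrix (Fin n) (Fin D ⊕ Fin L) ℝ := QM - Q2 with hQdef
  have hP : Qᵀ * Q = QMᵀ * QM + Q2ᵀ * Q2 := by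
    rw [hQdef, transpose_sub, Matrix.sub_mul, Matrix.mul_sub, Matrix.mul_sub, hQMtQ2, hQ2tQM]
    abel
  have hPsym : (Qᵀ * Q)ᵀ = Qᵀ * Q := by
    rw [hP, transpose_add, hQMsym, hQ2sym]
  have hPidem : (Qᵀ * Q) * (Qᵀ * Q) = Qᵀ * Q := by
    rw [hP, add_mul, mul_add, mul_add]
    have c1 : QMᵀ * QM * (Q2ᵀ * Q2) = 0 := by
      rw [Matrix.mul_assoc, ← Matrix.mul_assoc QM Q2ᵀ Q2, hQMQ2t, Matrix.zero_mul,
        Matrix.mul_zero]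
    have c2 : Q2ᵀ * Q2 * (QMᵀ * QM) = 0 := by
      rw [Matrix.mul_assoc, ← Matrix.mul_assoc Q2 QMᵀ QM, hQ2QMt, Matrix.zero_mul,
        Matrix.mul_zero]
    rw [c1, c2, hQMidem, hQ2idem]
    abel
  have hQbound : ∀ x : (Fin D ⊕ Fin L) → ℝ, (Q *ᵥ x) ⬝ᵥ (Q *ᵥ x) ≤ x ⬝ᵥ x := by
    intro x
    have h1 : x ⬝ᵥ ((Qᵀ * Q) *ᵥ x) = (Q *ᵥ x) ⬝ᵥ (Q *ᵥ x) := by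
      rw [← mulVec_mulVec, dotProduct_mulVec, vecMul_transpose]
    rw [← h1]
    exact quad_le_of_proj hPsym hPidem x
  -- the main trace identity
  have h_eq : trace ((M - C2)ᵀ * Q) = nuclearNorm M + nuclearNorm C2 := by
    rw [hQdef, transpose_sub, Matrix.sub_mul, Matrix.mul_sub, Matrix.mul_sub, trace_sub,
      trace_sub, trace_sub, hMQ2, hC2QM, trace_zero, hQMtr, hQ2tr]
    ring
  -- the upper bound
  have hsplit : M - C2 = (M - E) + tangentProj Au Av E := by
    rw [tangentProj, ← hC2def]
    abel
  have h_le : trace ((M - C2)ᵀ * Q) ≤ nuclearNorm (M - E) + nuclearNorm (tangentProj Au Av E) := by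
    rw [hsplit, transpose_add, Matrix.add_mul, trace_add]
    exact add_le_add (trace_le_nuclearNorm _ _ hQbound) (trace_le_nuclearNorm _ _ hQbound)
  have hME : M - E = Matrix.fromCols X Zhat := by
    rw [hMdef, hEdef]
    ext i j
    cases j with
    | inl j => simp [Matrix.fromCols, Matrix.sub_apply]
    | inr j => simp [Matrix.fromCols, Matrix.sub_apply]
  rw [hME] at h_le
  have := h_eq ▸ h_le
  linarith
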